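/- arXiv:2401.06083 — 2 statements merged into one kernel-verified Lean document; each statement's English description precedes it below -/
import Mathlib

section
/- Let σ ≥ 0 and Y := {{ψ_k}_k ∈ L log^{σ/2}L([0,1]; ℓ²) : D_k ψ_k = 0 for all k}. If {g_k}_k ∈ exp(L^{2/σ})([0,1]; ℓ²) annihilates Y, i.e. ∫ Σ_k g_k ψ_k = 0 for all {ψ_k}_k ∈ Y, then D_k g_k = g_k for every k. -/
/-!
Since `E_k` replaces a function by its averages over the dyadic intervals of length `2^{-k}`,
it is self-adjoint on `[0,1)`, and so is `D_k`; the tower identities `E_j E_k = E_{min j k}` for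
neighbouring levels make `D_k` idempotent. Therefore for every bounded measurable `φ`, the
sequence with `φ - D_k φ` in slot `k` and `0` elsewhere lies in `Y` (it is bounded, so it lies
in every Orlicz space), and pairing `{g_j}` with it gives `∫ (g_k - D_k g_k) φ = 0`.
Taking `φ` to be indicator functions yields `g_k = D_k g_k` a.e.
-/

open MeasureTheory Real Set

noncomputable section

/-- The Young function `B_σ(t) = t (log(e + t))^σ`. -/
noncomputable def Bfun (σ t : ℝ) : ℝ := t * (Real.log (Real.exp 1 + t)) ^ σ

/-- Dyadic conditional expectation on `[0,1]`: `E_k f` is the average of `f` on the dyadic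
interval of length `2^{-k}` containing `x`. -/
noncomputable def Ek (k : ℕ) (f : ℝ → ℝ) (x : ℝ) : ℝ :=
  (2:ℝ)^k * ∫ y in Set.Ico ((⌊x * 2^k⌋ : ℝ) / 2^k) ((⌊x * 2^k⌋ + 1 : ℝ) / 2^k), f y

/-- Dyadic martingale differences: `D_0 f = E_0 f`, `D_{k+1} f = E_{k+1} f − E_k f`. -/
noncomputable def Dk : ℕ → (ℝ → ℝ) → ℝ → ℝ
  | 0 => fun f => Ek 0 f
  | (k+1) => fun f x => Ek (k+1) f x - Ek k f x

/-- The dyadic martingale square function `S_M f = (Σ_{k ≥ 1} |D_k f|²)^{1/2}`. -/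
noncomputable def SM (f : ℝ → ℝ) (x : ℝ) : ℝ := Real.sqrt (∑' k : ℕ, (Dk (k+1) f x)^2)

/-- The `L^p([0,1])` norm. -/
noncomputable def pNorm (p : ℝ) (f : ℝ → ℝ) : ℝ :=
  (∫ x in Set.Ioc (0:ℝ) 1, |f x| ^ p) ^ (1/p)

/-- The Luxemburg norm on `[0,1]` associated with a Young function `Φ`. -/
noncomputable def luxNorm01 (Φ : ℝ → ℝ) (f : ℝ → ℝ) : ℝ :=
  sInf {lam : ℝ | 0 < lam ∧ (∫ x in Set.Ioc (0:ℝ) 1, Φ (|f x| / lam)) ≤ 1}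

def dyadicInterval (k : ℕ) (n : ℤ) : Set ℝ := Ico ((n : ℝ) / 2 ^ k) ((n + 1 : ℝ) / 2 ^ k)

section DyadicInterval

variable {k : ℕ} {n : ℤ} {x : ℝ}

theorem mem_dyadicInterval_iff : x ∈ dyadicInterval k n ↔ ⌊x * 2 ^ k⌋ = n := by
  have h2 : (0 : ℝ) < 2 ^ k := by positivity
  rw [Int.floor_eq_iff, dyadicInterval, mem_Ico, div_le_iff₀ h2, lt_div_iff₀ h2]

theorem mem_dyadicInterval_floor (k : ℕ) (x : ℝ) : x ∈ dyadicInterval k ⌊x * 2 ^ k⌋ :=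
  mem_dyadicInterval_iff.2 rfl

theorem measureReal_dyadicInterval (k : ℕ) (n : ℤ) :
    volume.real (dyadicInterval k n) = (2 ^ k)⁻¹ := by
  rw [dyadicInterval, Real.volume_real_Ico_of_le (by gcongr; linarith)]
  ring

theorem measurableSet_dyadicInterval (k : ℕ) (n : ℤ) : MeasurableSet (dyadicInterval k n) :=
  measurableSet_Ico

theorem volume_dyadicInterval_lt_top (k : ℕ) (n : ℤ) : volume (dyadicInterval k n) < ⊤ :=
  measure_Ico_lt_top

theorem volume_dyadicInterval_ne_zero (k : ℕ) (n : ℤ) : volume (dyadicInterval k n) ≠ 0 := by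
  rw [dyadicInterval, Real.volume_Ico]
  simp [add_div]

theorem pairwiseDisjoint_dyadicInterval (k : ℕ) (S : Set ℤ) :
    S.PairwiseDisjoint (dyadicInterval k) :=
  fun _ _ _ _ hnm => Set.disjoint_left.2 fun _ hn hm =>
    hnm ((mem_dyadicInterval_iff.1 hn).symm.trans (mem_dyadicInterval_iff.1 hm))

theorem biUnion_dyadicInterval (k : ℕ) (m M : ℤ) :
    ⋃ n ∈ Finset.Ico m M, dyadicInterval k n = Ico ((m : ℝ) / 2 ^ k) ((M : ℝ) / 2 ^ k) := by
  have h2 : (0 : ℝ) < 2 ^ k := by positivity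
  ext x
  simp only [mem_iUnion, Finset.mem_Ico, mem_dyadicInterval_iff, exists_prop, exists_eq_right',
    mem_Ico, div_le_iff₀ h2, lt_div_iff₀ h2, Int.le_floor, Int.floor_lt]

theorem dyadicInterval_eq_union (k : ℕ) (n : ℤ) :
    dyadicInterval k n = dyadicInterval (k + 1) (2 * n) ∪ dyadicInterval (k + 1) (2 * n + 1) := by
  have h := biUnion_dyadicInterval (k + 1) (2 * n) (2 * n + 2)
  rw [show Finset.Ico (2 * n) (2 * n + 2) = {2 * n, 2 * n + 1} by ext; simp; omega] at h
  simp only [Finset.mem_insert, Finset.mem_singleton, iUnion_iUnion_eq_or_left,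
    iUnion_iUnion_eq_left] at h
  rw [h, dyadicInterval]
  congr 1 <;> push_cast <;> field_simp <;> ring

theorem exists_dyadicInterval_succ_subset (k : ℕ) (m : ℤ) :
    ∃ n, dyadicInterval (k + 1) m ⊆ dyadicInterval k n := by
  obtain ⟨n, rfl | rfl⟩ := Int.even_or_odd' m
  · exact ⟨n, (dyadicInterval_eq_union k n).symm ▸ subset_union_left⟩
  · exact ⟨n, (dyadicInterval_eq_union k n).symm ▸ subset_union_right⟩

theorem Ico_zero_one_eq_biUnion_dyadicInterval (k : ℕ) :
    Ico (0 : ℝ) 1 = ⋃ n ∈ Finset.Ico 0 (2 ^ k : ℤ), dyadicInterval k n := by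
  rw [biUnion_dyadicInterval]
  push_cast
  rw [zero_div, div_self (by positivity)]

theorem Ico_mem_nhds_floor (k : ℕ) (x : ℝ) :
    Ico (((⌊x * 2 ^ k⌋ - 1 : ℤ) : ℝ) / 2 ^ k) (((⌊x * 2 ^ k⌋ + 1 : ℤ) : ℝ) / 2 ^ k) ∈ nhds x := by
  obtain ⟨hx₁, hx₂⟩ := mem_dyadicInterval_floor k x
  refine Ico_mem_nhds (lt_of_lt_of_le ?_ hx₁) (by exact_mod_cast hx₂)
  gcongr
  linarith

end DyadicInterval

theorem MeasureTheory.LocallyIntegrable.integrableOn_Ico {E : Type*} [NormedAddCommGroup E]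
    {f : ℝ → E} (hf : LocallyIntegrable f) (a b : ℝ) : IntegrableOn f (Ico a b) :=
  (hf.integrableOn_isCompact isCompact_Icc).mono_set Ico_subset_Icc_self

section Ek

variable {k : ℕ} {n : ℤ} {f g : ℝ → ℝ} {x : ℝ}

theorem Ek_eq_setAverage (k : ℕ) (f : ℝ → ℝ) (x : ℝ) :
    Ek k f x = ⨍ y in dyadicInterval k ⌊x * 2 ^ k⌋, f y := by
  rw [setAverage_eq, measureReal_dyadicInterval, inv_inv, smul_eq_mul]
  rfl

theorem Ek_eq_of_mem (f : ℝ → ℝ) (hx : x ∈ dyadicInterval k n) :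
    Ek k f x = ⨍ y in dyadicInterval k n, f y := by
  rw [Ek_eq_setAverage, mem_dyadicInterval_iff.1 hx]

theorem Ek_eq_of_forall_mem_eq {c : ℝ} (hf : ∀ y ∈ dyadicInterval k n, f y = c)
    (hx : x ∈ dyadicInterval k n) : Ek k f x = c := by
  rw [Ek_eq_of_mem f hx, setAverage_congr_fun (measurableSet_dyadicInterval _ _) (ae_of_all _ hf),
    setAverage_const (volume_dyadicInterval_ne_zero k n) (volume_dyadicInterval_lt_top _ _).ne]

theorem measurable_Ek (k : ℕ) (f : ℝ → ℝ) : Measurable (Ek k f) := by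
  have : Ek k f = (fun n : ℤ => ⨍ y in dyadicInterval k n, f y) ∘ fun x => ⌊x * 2 ^ k⌋ :=
    funext (Ek_eq_setAverage k f)
  rw [this]
  exact (measurable_of_countable _).comp (Int.measurable_floor.comp (measurable_mul_const _))

theorem integrableOn_Ek_dyadicInterval (k : ℕ) (f : ℝ → ℝ) (n : ℤ) :
    IntegrableOn (Ek k f) (dyadicInterval k n) :=
  (integrableOn_const (volume_dyadicInterval_lt_top _ _).ne).congr_fun
    (fun _ hy => (Ek_eq_of_mem f hy).symm) (measurableSet_dyadicInterval _ _)

theorem locallyIntegrable_Ek (k : ℕ) (f : ℝ → ℝ) : LocallyIntegrable (Ek k f) := fun x =>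
  ⟨_, Ico_mem_nhds_floor k x, by
    rw [← biUnion_dyadicInterval, integrableOn_finset_iUnion]
    exact fun n _ => integrableOn_Ek_dyadicInterval k f n⟩

theorem setIntegral_Ek (k : ℕ) (f : ℝ → ℝ) (n : ℤ) :
    ∫ y in dyadicInterval k n, Ek k f y = ∫ y in dyadicInterval k n, f y := by
  rw [setIntegral_congr_fun (measurableSet_dyadicInterval _ _) fun _ hy => Ek_eq_of_mem f hy]
  have : IsFiniteMeasure (volume.restrict (dyadicInterval k n)) :=
    isFiniteMeasure_restrict.2 (volume_dyadicInterval_lt_top _ _).ne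
  exact integral_average _ _

theorem Ek_sub (hf : LocallyIntegrable f) (hg : LocallyIntegrable g) :
    Ek k (f - g) = Ek k f - Ek k g := by
  ext x
  have hf' : IntegrableOn f (dyadicInterval k ⌊x * 2 ^ k⌋) := hf.integrableOn_Ico _ _
  have hg' : IntegrableOn g (dyadicInterval k ⌊x * 2 ^ k⌋) := hg.integrableOn_Ico _ _
  simp only [Ek_eq_setAverage, setAverage_eq, Pi.sub_apply]
  rw [integral_sub hf' hg', smul_sub]

theorem Ek_Ek (k : ℕ) (f : ℝ → ℝ) : Ek k (Ek k f) = Ek k f :=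
  funext fun x => Ek_eq_of_forall_mem_eq (fun _ hy => (Ek_eq_of_mem f hy).trans
    (Ek_eq_of_mem f (mem_dyadicInterval_floor k x)).symm) (mem_dyadicInterval_floor k x)

theorem Ek_succ_Ek (k : ℕ) (f : ℝ → ℝ) : Ek (k + 1) (Ek k f) = Ek k f := by
  ext x
  obtain ⟨n, hn⟩ := exists_dyadicInterval_succ_subset k ⌊x * 2 ^ (k + 1)⌋
  have hx := hn (mem_dyadicInterval_floor (k + 1) x)
  exact Ek_eq_of_forall_mem_eq
    (fun y hy => (Ek_eq_of_mem f (hn hy)).trans (Ek_eq_of_mem f hx).symm)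
    (mem_dyadicInterval_floor (k + 1) x)

theorem Ek_Ek_succ (hf : LocallyIntegrable f) : Ek k (Ek (k + 1) f) = Ek k f := by
  ext x
  set n := ⌊x * 2 ^ k⌋
  have hunion := dyadicInterval_eq_union k n
  have hdisj := pairwiseDisjoint_dyadicInterval (k + 1) univ (mem_univ (2 * n))
    (mem_univ (2 * n + 1)) (by omega)
  have hf' (m : ℤ) : IntegrableOn f (dyadicInterval (k + 1) m) := hf.integrableOn_Ico _ _
  have hE (m : ℤ) := integrableOn_Ek_dyadicInterval (k + 1) f m
  have hmeas := measurableSet_dyadicInterval (k + 1) (2 * n + 1)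
  rw [Ek_eq_setAverage k _ x, Ek_eq_setAverage k f x, setAverage_eq, setAverage_eq, hunion,
    setIntegral_union hdisj hmeas (hE _) (hE _), setIntegral_union hdisj hmeas (hf' _) (hf' _),
    setIntegral_Ek, setIntegral_Ek]

end Ek

section SelfAdjoint

variable {k : ℕ} {f h : ℝ → ℝ}

theorem integrableOn_Ek_mul (f : ℝ → ℝ) (hh : IntegrableOn h (Ico 0 1)) :
    IntegrableOn (fun x => Ek k f x * h x) (Ico 0 1) := by
  rw [Ico_zero_one_eq_biUnion_dyadicInterval k, integrableOn_finset_iUnion] at hh ⊢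
  exact fun n hn => IntegrableOn.congr_fun ((hh n hn).const_mul _)
    (fun x hx => by rw [Ek_eq_of_mem f hx]) (measurableSet_dyadicInterval k n)

theorem setIntegral_Ek_mul (f h : ℝ → ℝ) (n : ℤ) :
    ∫ x in dyadicInterval k n, Ek k f x * h x
      = (⨍ y in dyadicInterval k n, f y) * ∫ x in dyadicInterval k n, h x := by
  rw [setIntegral_congr_fun (measurableSet_dyadicInterval k n) fun x hx => by
    rw [Ek_eq_of_mem f hx], integral_const_mul]

theorem integral_Ek_mul (hf : IntegrableOn f (Ico 0 1)) (hh : IntegrableOn h (Ico 0 1)) :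
    ∫ x in Ico 0 1, Ek k f x * h x = ∫ x in Ico 0 1, f x * Ek k h x := by
  have hfh := integrableOn_Ek_mul (k := k) f hh
  have hhf := integrableOn_Ek_mul (k := k) h hf
  simp_rw [mul_comm (f _)]
  rw [Ico_zero_one_eq_biUnion_dyadicInterval k, integrableOn_finset_iUnion] at hfh hhf
  rw [Ico_zero_one_eq_biUnion_dyadicInterval k,
    integral_biUnion_finset _ (fun n _ => measurableSet_dyadicInterval k n)
      (pairwiseDisjoint_dyadicInterval k _) hfh,
    integral_biUnion_finset _ (fun n _ => measurableSet_dyadicInterval k n)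
      (pairwiseDisjoint_dyadicInterval k _) hhf]
  refine Finset.sum_congr rfl fun n _ => ?_
  simp only [setIntegral_Ek_mul, setAverage_eq, smul_eq_mul]
  ring

end SelfAdjoint

theorem abs_Ek_le {C : ℝ} {f : ℝ → ℝ} (hf : ∀ y, |f y| ≤ C) (k : ℕ) (x : ℝ) :
    |Ek k f x| ≤ C := by
  have hpos : 0 < volume.real (dyadicInterval k ⌊x * 2 ^ k⌋) := by
    rw [measureReal_dyadicInterval]; positivity
  rw [Ek_eq_setAverage, setAverage_eq, smul_eq_mul, abs_mul, abs_inv, abs_of_pos hpos,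
    inv_mul_le_iff₀ hpos, mul_comm _ C]
  exact norm_setIntegral_le_of_norm_le_const (volume_dyadicInterval_lt_top _ _)
    fun y _ => (Real.norm_eq_abs (f y)).trans_le (hf y)

section Dk

variable {k : ℕ} {f g h : ℝ → ℝ}

theorem Dk_succ (k : ℕ) (f : ℝ → ℝ) : Dk (k + 1) f = Ek (k + 1) f - Ek k f := rfl

theorem Dk_zero (k : ℕ) : Dk k 0 = 0 := by
  cases k <;> ext x <;> simp [Dk, Ek]

theorem measurable_Dk (k : ℕ) (f : ℝ → ℝ) : Measurable (Dk k f) := by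
  cases k with
  | zero => exact measurable_Ek 0 f
  | succ k => exact (measurable_Ek _ f).sub (measurable_Ek k f)

theorem locallyIntegrable_Dk (k : ℕ) (f : ℝ → ℝ) : LocallyIntegrable (Dk k f) := by
  cases k with
  | zero => exact locallyIntegrable_Ek 0 f
  | succ k => exact (locallyIntegrable_Ek _ f).sub (locallyIntegrable_Ek k f)

theorem abs_Dk_le {C : ℝ} (hf : ∀ y, |f y| ≤ C) (k : ℕ) (x : ℝ) : |Dk k f x| ≤ 2 * C := by
  have hC : 0 ≤ C := (abs_nonneg _).trans (hf 0)
  cases k with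
  | zero => exact (abs_Ek_le hf 0 x).trans (by linarith)
  | succ k =>
    calc |Ek (k + 1) f x - Ek k f x| ≤ |Ek (k + 1) f x| + |Ek k f x| := abs_sub _ _
      _ ≤ 2 * C := by linarith [abs_Ek_le hf (k + 1) x, abs_Ek_le hf k x]

theorem Dk_sub (hf : LocallyIntegrable f) (hg : LocallyIntegrable g) :
    Dk k (f - g) = Dk k f - Dk k g := by
  cases k with
  | zero => exact Ek_sub hf hg
  | succ k => simp only [Dk_succ, Ek_sub hf hg]; abel

theorem Dk_Dk (hf : LocallyIntegrable f) : Dk k (Dk k f) = Dk k f := by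
  cases k with
  | zero => exact Ek_Ek 0 f
  | succ k =>
    rw [Dk_succ, Dk_succ, Ek_sub (locallyIntegrable_Ek _ f) (locallyIntegrable_Ek _ f),
      Ek_sub (locallyIntegrable_Ek _ f) (locallyIntegrable_Ek _ f), Ek_Ek, Ek_Ek, Ek_succ_Ek,
      Ek_Ek_succ hf]
    abel

theorem Dk_sub_Dk_self (hf : LocallyIntegrable f) : Dk k (f - Dk k f) = 0 := by
  rw [Dk_sub hf (locallyIntegrable_Dk k f), Dk_Dk hf, sub_self]

theorem integrableOn_Dk_mul (f : ℝ → ℝ) (hh : IntegrableOn h (Ico 0 1)) :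
    IntegrableOn (fun x => Dk k f x * h x) (Ico 0 1) := by
  cases k with
  | zero => exact integrableOn_Ek_mul f hh
  | succ k =>
    simpa only [Dk_succ, Pi.sub_apply, Pi.sub_def, sub_mul] using
      (integrableOn_Ek_mul f hh).sub (integrableOn_Ek_mul f hh)

theorem integral_Dk_mul (hf : IntegrableOn f (Ico 0 1)) (hh : IntegrableOn h (Ico 0 1)) :
    ∫ x in Ico 0 1, Dk k f x * h x = ∫ x in Ico 0 1, f x * Dk k h x := by
  cases k with
  | zero => exact integral_Ek_mul hf hh
  | succ k =>
    have hmul (j : ℕ) : IntegrableOn (fun x => f x * Ek j h x) (Ico 0 1) := by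
      simpa only [mul_comm] using integrableOn_Ek_mul (k := j) h hf
    simp only [Dk_succ, Pi.sub_apply, sub_mul, mul_sub]
    rw [integral_sub (integrableOn_Ek_mul f hh) (integrableOn_Ek_mul f hh),
      integral_sub (hmul _) (hmul _), integral_Ek_mul hf hh, integral_Ek_mul hf hh]

theorem abs_sub_Dk_le {C : ℝ} (hf : ∀ y, |f y| ≤ C) (k : ℕ) (x : ℝ) :
    |(f - Dk k f) x| ≤ 3 * C := by
  rw [Pi.sub_apply]
  linarith [abs_sub (f x) (Dk k f x), hf x, abs_Dk_le hf k x]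

theorem Dk_single_sub_Dk_self (hf : LocallyIntegrable f) (k j : ℕ) :
    Dk j ((Pi.single k (f - Dk k f) : ℕ → ℝ → ℝ) j) = 0 := by
  rw [Pi.single_apply]
  split_ifs with hj
  · exact hj ▸ Dk_sub_Dk_self hf
  · exact Dk_zero j

theorem integral_sub_Dk_mul (hf : IntegrableOn f (Ico 0 1)) (hh : IntegrableOn h (Ico 0 1))
    (hfh : IntegrableOn (fun x => f x * h x) (Ico 0 1)) :
    ∫ x in Ico 0 1, (f - Dk k f) x * h x = ∫ x in Ico 0 1, f x * (h - Dk k h) x := by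
  have hfDh : IntegrableOn (fun x => f x * Dk k h x) (Ico 0 1) := by
    simpa only [mul_comm] using integrableOn_Dk_mul (k := k) h hf
  simp only [Pi.sub_apply, sub_mul, mul_sub]
  rw [integral_sub hfh (integrableOn_Dk_mul f hh), integral_sub hfh hfDh, integral_Dk_mul hf hh]

end Dk

theorem measurable_Bfun (s : ℝ) : Measurable (Bfun s) := by
  unfold Bfun; fun_prop

theorem Bfun_nonneg (s : ℝ) {t : ℝ} (ht : 0 ≤ t) : 0 ≤ Bfun s t :=
  mul_nonneg ht (Real.rpow_nonneg (Real.log_nonneg (by linarith [Real.add_one_le_exp 1])) s)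

theorem Bfun_le_one (s : ℝ) {t : ℝ} (ht0 : 0 ≤ t) (ht : t * 2 ^ |s| ≤ 1) : Bfun s t ≤ 1 := by
  have h2 : (1 : ℝ) ≤ 2 ^ |s| := Real.one_le_rpow one_le_two (abs_nonneg s)
  have hlog1 : 1 ≤ Real.log (Real.exp 1 + t) := by
    rw [Real.le_log_iff_exp_le (by positivity)]; linarith
  have hlog2 : Real.log (Real.exp 1 + t) ≤ 2 := by
    rw [Real.log_le_iff_le_exp (by positivity), show (2 : ℝ) = 1 + 1 by norm_num, Real.exp_add]
    nlinarith [Real.add_one_le_exp 1]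
  calc Bfun s t ≤ t * 2 ^ |s| := mul_le_mul_of_nonneg_left
        ((Real.rpow_le_rpow_of_exponent_le hlog1 (le_abs_self s)).trans
          (Real.rpow_le_rpow (by linarith) hlog2 (abs_nonneg s))) ht0
    _ ≤ 1 := ht

theorem exists_integral_Bfun_div_le_one {α : Type*} [MeasurableSpace α] {μ : Measure α}
    [IsFiniteMeasure μ] (hμ : μ.real univ ≤ 1) (s : ℝ) {F : α → ℝ} {M : ℝ} (hM : 0 < M)
    (hF : Measurable F) (hF0 : ∀ x, 0 ≤ F x) (hFM : ∀ x, F x ≤ M) :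
    ∃ lam, 0 < lam ∧ Integrable (fun x => Bfun s (F x / lam)) μ ∧
      ∫ x, Bfun s (F x / lam) ∂μ ≤ 1 := by
  have h2 : (0 : ℝ) < 2 ^ |s| := by positivity
  have hB (x : α) : ‖Bfun s (F x / (M * 2 ^ |s|))‖ ≤ 1 := by
    rw [Real.norm_eq_abs, abs_of_nonneg (Bfun_nonneg s (by have := hF0 x; positivity))]
    refine Bfun_le_one s (by have := hF0 x; positivity) ?_
    rw [div_mul_eq_mul_div, div_le_one (by positivity)]
    exact mul_le_mul_of_nonneg_right (hFM x) h2.le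
  refine ⟨M * 2 ^ |s|, by positivity, ?_, ?_⟩
  · exact Integrable.of_bound ((measurable_Bfun s).comp (hF.div_const _)).aestronglyMeasurable 1
      (ae_of_all _ hB)
  · calc ∫ x, Bfun s (F x / (M * 2 ^ |s|)) ∂μ ≤ 1 * μ.real univ :=
          norm_integral_le_of_norm_le_const (ae_of_all _ hB) |>.trans' (le_abs_self _)
      _ ≤ 1 := by linarith

theorem ae_eq_zero_of_forall_integral_mul_eq_zero {α : Type*} [MeasurableSpace α]
    {μ : Measure α} {w : α → ℝ} (hw : Integrable w μ)
    (h : ∀ φ : α → ℝ, Measurable φ → (∀ x, |φ x| ≤ 1) → ∫ x, w x * φ x ∂μ = 0) :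
    w =ᵐ[μ] 0 := by
  refine hw.ae_eq_zero_of_forall_setIntegral_eq_zero fun s hs _ => ?_
  have hind : (fun x => w x * s.indicator 1 x) = s.indicator w := by
    ext x; by_cases hx : x ∈ s <;> simp [hx]
  have := h (s.indicator 1) (measurable_one.indicator hs) fun x => by
    by_cases hx : x ∈ s <;> simp [hx]
  rwa [hind, integral_indicator hs] at this

theorem tsum_mul_single_apply {ι α : Type*} [DecidableEq ι] (g : ι → α → ℝ) (k : ι)
    (v : α → ℝ) (x : α) : ∑' j, g j x * (Pi.single k v : ι → α → ℝ) j x = g k x * v x := by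
  simp [Pi.single_apply, ite_apply]

theorem sqrt_tsum_single_apply_sq {ι α : Type*} [DecidableEq ι] (k : ι) (v : α → ℝ) (x : α) :
    Real.sqrt (∑' j, ((Pi.single k v : ι → α → ℝ) j x) ^ 2) = |v x| := by
  simp [Pi.single_apply, ite_apply, Real.sqrt_sq_eq_abs]

theorem MeasureTheory.Integrable.single_apply {ι α : Type*} [DecidableEq ι] [MeasurableSpace α]
    {μ : Measure α} {v : α → ℝ} (hv : Integrable v μ) (k j : ι) :
    Integrable ((Pi.single k v : ι → α → ℝ) j) μ := by
  rw [Pi.single_apply]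
  split_ifs
  exacts [hv, integrable_zero _ _ _]

theorem annihilator_fixed_by_Dk_general (σ : ℝ) (g : ℕ → ℝ → ℝ)
    (hg : ∀ k, IntegrableOn (g k) (Set.Ioc (0:ℝ) 1))
    (hann : ∀ ψ : ℕ → ℝ → ℝ,
      (∀ k, IntegrableOn (ψ k) (Set.Ioc (0:ℝ) 1)) →
      (∃ lam : ℝ, 0 < lam ∧
        IntegrableOn (fun x => Bfun (σ/2) (Real.sqrt (∑' k, (ψ k x)^2) / lam))
          (Set.Ioc (0:ℝ) 1) ∧
        (∫ x in Set.Ioc (0:ℝ) 1,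
          Bfun (σ/2) (Real.sqrt (∑' k, (ψ k x)^2) / lam)) ≤ 1) →
      (∀ k, ∀ᵐ x ∂(volume.restrict (Set.Ioc (0:ℝ) 1)), Dk k (ψ k) x = 0) →
      IntegrableOn (fun x => ∑' k, g k x * ψ k x) (Set.Ioc (0:ℝ) 1) →
      (∫ x in Set.Ioc (0:ℝ) 1, ∑' k, g k x * ψ k x) = 0) :
    ∀ k, ∀ᵐ x ∂(volume.restrict (Set.Ioc (0:ℝ) 1)), Dk k (g k) x = g k x := by
  -- dyadic intervals are closed on the left, so we work on `[0,1)` instead of `(0,1]`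
  simp only [IntegrableOn, ← restrict_Ico_eq_restrict_Ioc] at hg hann ⊢
  intro k
  have hpair (φ : ℝ → ℝ) (hφ : Measurable φ) (hφ1 : ∀ x, |φ x| ≤ 1) :
      ∫ x in Ico 0 1, (g k - Dk k (g k)) x * φ x = 0 := by
    have hφloc : LocallyIntegrable φ := (locallyIntegrable_const (1 : ℝ)).mono
      hφ.aestronglyMeasurable (ae_of_all _ fun x => by simpa using hφ1 x)
    have hv : Measurable (φ - Dk k φ) := hφ.sub (measurable_Dk k φ)
    have hv3 (x : ℝ) : |(φ - Dk k φ) x| ≤ 3 := by simpa using abs_sub_Dk_le hφ1 k x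
    obtain ⟨lam, hlam, hB⟩ := exists_integral_Bfun_div_le_one
      (μ := volume.restrict (Ico 0 1)) (by simp) (σ / 2) three_pos hv.abs (fun _ => abs_nonneg _)
      hv3
    have hY := hann (Pi.single k (φ - Dk k φ))
      ((Integrable.of_bound hv.aestronglyMeasurable 3 (ae_of_all _ hv3)).single_apply k)
      ⟨lam, hlam, by simpa only [sqrt_tsum_single_apply_sq] using hB⟩
      (fun j => ae_of_all _ (congrFun (Dk_single_sub_Dk_self hφloc k j)))
      (by simpa only [tsum_mul_single_apply] using
        (hg k).mul_bdd hv.aestronglyMeasurable (ae_of_all _ hv3))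
    rw [integral_sub_Dk_mul (hg k) (hφloc.integrableOn_Ico 0 1)
      ((hg k).mul_bdd hφ.aestronglyMeasurable (ae_of_all _ hφ1))]
    simpa only [tsum_mul_single_apply] using hY
  filter_upwards [ae_eq_zero_of_forall_integral_mul_eq_zero
    ((hg k).sub ((locallyIntegrable_Dk k (g k)).integrableOn_Ico 0 1)) hpair] with x hx
  exact (sub_eq_zero.1 hx).symm

/-- Let `σ ≥ 0` and let `Y` be the set of sequences `{ψ_k}` in
`L log^{σ/2}L([0,1]; ℓ²)` with `D_k ψ_k = 0` for all `k`.  If `{g_k}` (in the dual space,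
in particular integrable) annihilates `Y`, i.e. `∫ Σ_k g_k ψ_k = 0` for all `{ψ_k} ∈ Y`,
then `D_k g_k = g_k` a.e. for every `k`. -/
theorem annihilator_fixed_by_Dk (σ : ℝ) (hσ : 0 ≤ σ) (g : ℕ → ℝ → ℝ)
    (hg : ∀ k, IntegrableOn (g k) (Set.Ioc (0:ℝ) 1))
    (hann : ∀ ψ : ℕ → ℝ → ℝ,
      (∀ k, IntegrableOn (ψ k) (Set.Ioc (0:ℝ) 1)) →
      (∃ lam : ℝ, 0 < lam ∧
        IntegrableOn (fun x => Bfun (σ/2) (Real.sqrt (∑' k, (ψ k x)^2) / lam))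
          (Set.Ioc (0:ℝ) 1) ∧
        (∫ x in Set.Ioc (0:ℝ) 1,
          Bfun (σ/2) (Real.sqrt (∑' k, (ψ k x)^2) / lam)) ≤ 1) →
      (∀ k, ∀ᵐ x ∂(volume.restrict (Set.Ioc (0:ℝ) 1)), Dk k (ψ k) x = 0) →
      IntegrableOn (fun x => ∑' k, g k x * ψ k x) (Set.Ioc (0:ℝ) 1) →
      (∫ x in Set.Ioc (0:ℝ) 1, ∑' k, g k x * ψ k x) = 0) :
    ∀ k, ∀ᵐ x ∂(volume.restrict (Set.Ioc (0:ℝ) 1)), Dk k (g k) x = g k x :=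
  annihilator_fixed_by_Dk_general σ g hg hann
end
end

section
/- (Improved pointwise decay under cancellation) Let J be a finite interval with center c_J, f supported in J with ∫_J f = 0, and L ∈ Λ_1 with |L||J| < 1. Let Δ_L have symbol φ_L(ξ) = e^{2πic_Lξ}|L|φ(|L|ξ) with φ Schwartz (c_L the center of L). Then for all x ∈ ℝ: |Δ_L f(x)| ≲_M |L|²|J|² (1 + |L||x − c_J|)^{−M} ⟨|f|⟩_{1,J} for any large positive integer M. -/
/-!
Since `∫ f = 0`, `Δ_L f(x) = ∫ (K(x - y) - K(x - c_J)) f(y) dy` for the kernel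
`K(t) = e^{2πi c_L t} |L| φ(|L| t)`, and by the mean value theorem the bracket is at most
`|J| / 2` times the supremum of `|K'|` over `x - J`. Differentiating `K` costs a factor
`|c_L| + |L| ≲ |L|`, and since `|L||J| < 1`, Peetre's inequality makes the weight
`(1 + |L||t|)^{-M}` comparable on `x - J` to `(1 + |L||x - c_J|)^{-M}`.
-/

open MeasureTheory Real Set
open scoped SchwartzMap

noncomputable section

theorem SchwartzMap.exists_norm_le_div_one_add_norm_pow {E F : Type*} [NormedAddCommGroup E]
    [NormedSpace ℝ E] [NormedAddCommGroup F] [NormedSpace ℝ F] (φ : 𝓢(E, F)) (M : ℕ) :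
    ∃ A > 0, ∀ u, ‖φ u‖ ≤ A / (1 + ‖u‖) ^ M := by
  set S := 2 ^ M * (Finset.Iic (M, 0)).sup (fun m => SchwartzMap.seminorm ℝ m.1 m.2) φ
  refine ⟨S + 1, by positivity, fun u => ?_⟩
  have hS := one_add_le_sup_seminorm_apply (𝕜 := ℝ) (m := (M, 0)) le_rfl le_rfl φ u
  rw [norm_iteratedFDeriv_zero] at hS
  rw [le_div_iff₀ (by positivity), mul_comm]
  linarith

theorem one_add_mul_abs_le_mul_one_add_mul_abs {L δ s t : ℝ} (hL : 0 ≤ L)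
    (hst : |s - t| ≤ δ) : 1 + L * |s| ≤ (1 + L * δ) * (1 + L * |t|) := by
  have hs : |s| ≤ |t| + δ := by linarith [abs_sub_abs_le_abs_sub s t]
  have hδ : 0 ≤ δ := (abs_nonneg _).trans hst
  nlinarith [mul_le_mul_of_nonneg_left hs hL,
    mul_nonneg (mul_nonneg hL hL) (mul_nonneg hδ (abs_nonneg t))]

theorem inv_one_add_mul_abs_pow_le {L δ s t : ℝ} (hL : 0 ≤ L) (hst : |s - t| ≤ δ)
    (M : ℕ) :
    ((1 + L * |t|) ^ M)⁻¹ ≤ (1 + L * δ) ^ M / (1 + L * |s|) ^ M := by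
  rw [← one_div, div_le_div_iff₀ (by positivity) (by positivity), one_mul, ← mul_pow]
  exact pow_le_pow_left₀ (by positivity) (one_add_mul_abs_le_mul_one_add_mul_abs hL hst) M

/-- The convolution kernel of `Δ_L`, with `r = 2π c_L` and `L = |L|`. -/
def modulatedDilation (φ : 𝓢(ℝ, ℂ)) (r L t : ℝ) : ℂ :=
  Complex.exp (Complex.I * ((r * t : ℝ) : ℂ)) * (L : ℂ) * φ (L * t)

theorem hasDerivAt_modulatedDilation (φ : 𝓢(ℝ, ℂ)) (r L t : ℝ) :
    HasDerivAt (modulatedDilation φ r L)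
      (Complex.exp (Complex.I * ((r * t : ℝ) : ℂ)) * L *
        (Complex.I * r * φ (L * t) + L * deriv φ (L * t))) t := by
  have hexp : HasDerivAt (fun t : ℝ => Complex.exp (Complex.I * ((r * t : ℝ) : ℂ)))
      (Complex.exp (Complex.I * ((r * t : ℝ) : ℂ)) * (Complex.I * r)) t := by
    simpa using ((((hasDerivAt_id t).const_mul r).ofReal_comp).const_mul Complex.I).cexp
  have hφ : HasDerivAt (fun t : ℝ => φ (L * t)) (L • deriv φ (L * t)) t :=
    (φ.hasDerivAt (L * t)).scomp t (by simpa using (hasDerivAt_id t).const_mul L)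
  refine ((hexp.mul_const (L : ℂ)).mul hφ).congr_deriv ?_
  rw [Complex.real_smul]
  ring

theorem norm_deriv_modulatedDilation_le {φ : 𝓢(ℝ, ℂ)} {r ρ L A B : ℝ} {M : ℕ}
    (hL : 0 ≤ L) (hr : |r| ≤ ρ * L) (hA : ∀ u, ‖φ u‖ ≤ A / (1 + |u|) ^ M)
    (hB : ∀ u, ‖deriv φ u‖ ≤ B / (1 + |u|) ^ M) (t : ℝ) :
    ‖deriv (modulatedDilation φ r L) t‖ ≤ (ρ * A + B) * L ^ 2 / (1 + L * |t|) ^ M := by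
  have hLt : |L * t| = L * |t| := by rw [abs_mul, abs_of_nonneg hL]
  rw [(hasDerivAt_modulatedDilation φ r L t).deriv, norm_mul, norm_mul, mul_comm Complex.I,
    Complex.norm_exp_ofReal_mul_I, Complex.norm_real, Real.norm_eq_abs, abs_of_nonneg hL,
    one_mul]
  calc L * ‖Complex.I * r * φ (L * t) + L * deriv φ (L * t)‖
      ≤ L * (|r| * ‖φ (L * t)‖ + L * ‖deriv φ (L * t)‖) := by
        gcongr
        refine (norm_add_le _ _).trans_eq ?_
        simp [abs_of_nonneg hL]
    _ ≤ L * (ρ * L * (A / (1 + L * |t|) ^ M) + L * (B / (1 + L * |t|) ^ M)) := by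
        rw [← hLt]; gcongr
        exacts [(abs_nonneg r).trans hr, hA _, hB _]
    _ = (ρ * A + B) * L ^ 2 / (1 + L * |t|) ^ M := by ring

theorem norm_deriv_modulatedDilation_le_of_abs_sub_le {φ : 𝓢(ℝ, ℂ)}
    {r ρ L A B δ s t : ℝ} {M : ℕ} (hL : 0 < L) (hr : |r| ≤ ρ * L)
    (hA : ∀ u, ‖φ u‖ ≤ A / (1 + |u|) ^ M)
    (hB : ∀ u, ‖deriv φ u‖ ≤ B / (1 + |u|) ^ M) (hst : |s - t| ≤ δ) :
    ‖deriv (modulatedDilation φ r L) t‖ ≤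
      (ρ * A + B) * (1 + L * δ) ^ M * L ^ 2 / (1 + L * |s|) ^ M := by
  have hρ : 0 ≤ ρ := nonneg_of_mul_nonneg_left ((abs_nonneg r).trans hr) hL
  have hA0 : 0 ≤ A := by simpa using (norm_nonneg _).trans (hA 0)
  have hB0 : 0 ≤ B := by simpa using (norm_nonneg _).trans (hB 0)
  calc ‖deriv (modulatedDilation φ r L) t‖
      ≤ (ρ * A + B) * L ^ 2 * ((1 + L * |t|) ^ M)⁻¹ :=
        (norm_deriv_modulatedDilation_le hL.le hr hA hB t).trans_eq (div_eq_mul_inv _ _)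
    _ ≤ (ρ * A + B) * L ^ 2 * ((1 + L * δ) ^ M / (1 + L * |s|) ^ M) := by
        gcongr
        exact inv_one_add_mul_abs_pow_le hL.le hst M
    _ = _ := by ring

theorem norm_integral_mul_le_of_integral_eq_zero {g f : ℝ → ℂ} {c δ K x : ℝ}
    (hg : Differentiable ℝ g)
    (hg' : ∀ t ∈ Icc (x - c - δ) (x - c + δ), ‖deriv g t‖ ≤ K)
    (hf : Integrable f) (hsupp : Function.support f ⊆ Icc (c - δ) (c + δ))
    (hf0 : ∫ y, f y = 0) :
    ‖∫ y, g (x - y) * f y‖ ≤ K * δ * ∫ y in Icc (c - δ) (c + δ), ‖f y‖ := by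
  have hf_out : ∀ y ∉ Icc (c - δ) (c + δ), f y = 0 := fun y hy =>
    Function.notMem_support.mp fun hy' => hy (hsupp hy')
  have hdiff : ∀ y, ‖(g (x - y) - g (x - c)) * f y‖ ≤ K * δ * ‖f y‖ := by
    intro y
    by_cases hy : y ∈ Icc (c - δ) (c + δ)
    · obtain ⟨hy₁, hy₂⟩ := hy
      have hc : x - c ∈ Icc (x - c - δ) (x - c + δ) := ⟨by linarith, by linarith⟩
      have hxy : x - y ∈ Icc (x - c - δ) (x - c + δ) := ⟨by linarith, by linarith⟩
      have hyc : ‖x - y - (x - c)‖ ≤ δ := by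
        rw [Real.norm_eq_abs, abs_le]; constructor <;> linarith
      have hK : 0 ≤ K := (norm_nonneg _).trans (hg' _ hc)
      rw [norm_mul]
      gcongr
      calc ‖g (x - y) - g (x - c)‖ ≤ K * ‖x - y - (x - c)‖ :=
            (convex_Icc _ _).norm_image_sub_le_of_norm_deriv_le (fun t _ => hg t) hg' hc hxy
        _ ≤ K * δ := by gcongr
    · simp [hf_out y hy]
  have hint : Integrable (fun y => (g (x - y) - g (x - c)) * f y) := by
    refine (hf.norm.const_mul (K * δ)).mono' ?_ (.of_forall hdiff)
    exact ((hg.continuous.comp (continuous_const.sub continuous_id)).sub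
      continuous_const).aestronglyMeasurable.mul hf.1
  have hsplit : ∫ y, g (x - y) * f y = ∫ y, (g (x - y) - g (x - c)) * f y := by
    have hsum : (fun y => g (x - y) * f y) =
        fun y => (g (x - y) - g (x - c)) * f y + g (x - c) * f y := by
      funext y; ring
    rw [hsum, integral_add hint (hf.const_mul _), integral_const_mul, hf0, mul_zero, add_zero]
  rw [hsplit, setIntegral_eq_integral_of_forall_compl_eq_zero fun y hy => by simp [hf_out y hy],
    ← integral_const_mul]
  exact norm_integral_le_of_norm_le (hf.norm.const_mul _) (.of_forall hdiff)

theorem sub_pos_and_abs_add_eq_of_dyadic {a b : ℝ} {k : ℤ}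
    (hab : (a = 2 ^ k ∧ b = 2 ^ (k + 1)) ∨ (a = -2 ^ (k + 1) ∧ b = -2 ^ k)) :
    0 < b - a ∧ |a + b| = 3 * (b - a) := by
  have hk : (0 : ℝ) < 2 ^ k := by positivity
  rcases hab with ⟨rfl, rfl⟩ | ⟨rfl, rfl⟩ <;> rw [zpow_add_one₀ two_ne_zero]
  · exact ⟨by linarith, by rw [abs_of_pos (by positivity)]; ring⟩
  · exact ⟨by linarith, by rw [abs_of_neg (by linarith)]; ring⟩

/-- Improved pointwise decay under cancellation.  Let `J` be a finite
interval with center `c_J` and length `h`, `f` supported in `J` with `∫_J f = 0`, and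
`L = ±[2^k, 2^{k+1}) ∈ Λ₁` with `|L||J| < 1`.  Let `Δ_L` be the convolution operator with
kernel `t ↦ e^{2πi c_L t}|L| φ(|L|t)`, `φ` Schwartz, `c_L` the center of `L`.  Then for all
`x`: `|Δ_L f(x)| ≲_M |L|²|J|² (1 + |L||x − c_J|)^{−M} ⟨|f|⟩_{1,J}` for any `M ∈ ℕ`. -/
theorem pointwise_decay_with_cancellation (φ : SchwartzMap ℝ ℂ) (M : ℕ) :
    ∃ C > 0, ∀ (cJ h : ℝ), 0 < h →
      ∀ f : ℝ → ℂ, Integrable f →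
        Function.support f ⊆ Set.Icc (cJ - h/2) (cJ + h/2) →
        (∫ y, f y) = 0 →
      ∀ (a b : ℝ) (k : ℤ),
        ((a = (2:ℝ)^k ∧ b = (2:ℝ)^(k+1)) ∨ (a = -(2:ℝ)^(k+1) ∧ b = -(2:ℝ)^k)) →
        (b - a) * h < 1 →
      ∀ x : ℝ,
        ‖∫ y : ℝ, (Complex.exp (Complex.I * ((2 * π * ((a+b)/2) * (x - y) : ℝ) : ℂ)) *
            ((b - a : ℝ) : ℂ) * φ ((b - a) * (x - y))) * f y‖ ≤
          C * (b-a)^2 * h^2 * (1 + (b-a) * |x - cJ|) ^ (-(M:ℝ)) *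
            (h⁻¹ * ∫ y in Set.Icc (cJ - h/2) (cJ + h/2), ‖f y‖) := by
  obtain ⟨A, hA0, hA⟩ := φ.exists_norm_le_div_one_add_norm_pow M
  obtain ⟨B, hB0, hB⟩ := (SchwartzMap.derivCLM ℝ ℂ φ).exists_norm_le_div_one_add_norm_pow M
  set C := (3 * π * A + B) * (3 / 2) ^ M
  refine ⟨C, by positivity, ?_⟩
  intro cJ h hh f hf hsupp hf0 a b k hab hLh x
  obtain ⟨hL, hab⟩ := sub_pos_and_abs_add_eq_of_dyadic hab
  set L := b - a
  set Q := 1 + L * |x - cJ|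
  have hr : |2 * π * ((a + b) / 2)| ≤ 3 * π * L := by
    rw [abs_mul, abs_div, hab, abs_of_pos two_pi_pos]; norm_num; linarith
  have hker : ∀ t ∈ Icc (x - cJ - h / 2) (x - cJ + h / 2),
      ‖deriv (modulatedDilation φ (2 * π * ((a + b) / 2)) L) t‖ ≤ C * L ^ 2 / Q ^ M := by
    intro t ht
    have hst : |x - cJ - t| ≤ h / 2 := abs_le.2 ⟨by linarith [ht.2], by linarith [ht.1]⟩
    refine (norm_deriv_modulatedDilation_le_of_abs_sub_le hL hr (by simpa using hA)
      (by simpa using hB) hst).trans ?_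
    simp only [C]
    gcongr
    linarith
  calc _ ≤ C * L ^ 2 / Q ^ M * (h / 2) * ∫ y in Icc (cJ - h / 2) (cJ + h / 2), ‖f y‖ :=
        norm_integral_mul_le_of_integral_eq_zero
          (fun t => (hasDerivAt_modulatedDilation φ _ L t).differentiableAt) hker hf hsupp hf0
    _ ≤ C * L ^ 2 / Q ^ M * h * ∫ y in Icc (cJ - h / 2) (cJ + h / 2), ‖f y‖ := by
        gcongr; linarith
    _ = _ := by rw [rpow_neg (by positivity), rpow_natCast]; field_simp
end
end
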